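/- Let (𝒜, 𝒦) be evilly normal, and let H ∈ 𝒜 \ 𝒦 be a game equal to * in normal play. Then for all G ∈ 𝒜 \ 𝒦, the misère outcome of G + H equals the normal-play outcome of G, and the normal-play outcome of G + H equals the misère outcome of G. -/

import Mathlib

universe v

namespace SetTheory

/-- Pre-games (reconstruction of Mathlib's former `SetTheory.PGame`, removed from Mathlib). -/
inductive PGame : Type (v + 1)
  | mk : ∀ α β : Type v, (α → PGame) → (β → PGame) → PGame

namespace PGame

def LeftMoves : PGame.{v} → Type v
  | mk l _ _ _ => l

def RightMoves : PGame.{v} → Type v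
  | mk _ r _ _ => r

def moveLeft : ∀ g : PGame.{v}, LeftMoves g → PGame.{v}
  | mk _ _ L _ => L

def moveRight : ∀ g : PGame.{v}, RightMoves g → PGame.{v}
  | mk _ _ _ R => R

inductive IsOption : PGame.{v} → PGame.{v} → Prop
  | moveLeft {x : PGame.{v}} (i : x.LeftMoves) : IsOption (x.moveLeft i) x
  | moveRight {x : PGame.{v}} (i : x.RightMoves) : IsOption (x.moveRight i) x

theorem wf_isOption : WellFounded IsOption.{v} :=
  ⟨fun x => by
    induction x with
    | mk l r L R IHl IHr =>
      exact Acc.intro _ fun y h => by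
        cases h with
        | moveLeft i => exact IHl i
        | moveRight j => exact IHr j⟩

def Subsequent : PGame.{v} → PGame.{v} → Prop :=
  Relation.TransGen IsOption

instance : WellFoundedRelation PGame.{v} :=
  ⟨Subsequent, wf_isOption.transGen⟩

theorem subsequent_moveLeft (x : PGame.{v}) (i : x.LeftMoves) : Subsequent (x.moveLeft i) x :=
  Relation.TransGen.single (IsOption.moveLeft i)

theorem subsequent_moveRight (x : PGame.{v}) (j : x.RightMoves) : Subsequent (x.moveRight j) x :=
  Relation.TransGen.single (IsOption.moveRight j)

theorem subsequent_mk_left {xl xr : Type v} {xL : xl → PGame.{v}} {xR : xr → PGame.{v}} (i : xl) :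
    Subsequent (xL i) (mk xl xr xL xR) :=
  subsequent_moveLeft (mk xl xr xL xR) i

theorem subsequent_mk_right {xl xr : Type v} {xL : xl → PGame.{v}} {xR : xr → PGame.{v}} (j : xr) :
    Subsequent (xR j) (mk xl xr xL xR) :=
  subsequent_moveRight (mk xl xr xL xR) j

instance : Zero PGame.{v} := ⟨mk PEmpty PEmpty PEmpty.elim PEmpty.elim⟩

/-- Simultaneous definition of `≤` (first component) and `⧏` (second component). -/
def leLF : PGame.{v} → PGame.{v} → Prop × Prop
  | mk xl xr xL xR, mk yl yr yL yR =>
    ((∀ i, (leLF (xL i) (mk yl yr yL yR)).2) ∧ ∀ j, (leLF (mk xl xr xL xR) (yR j)).2,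
      (∃ i, (leLF (mk xl xr xL xR) (yL i)).1) ∨ ∃ j, (leLF (xR j) (mk yl yr yL yR)).1)
termination_by x y => (x, y)
decreasing_by
  all_goals first
    | exact Prod.Lex.left _ _ (subsequent_mk_left _)
    | exact Prod.Lex.left _ _ (subsequent_mk_right _)
    | exact Prod.Lex.right _ (subsequent_mk_left _)
    | exact Prod.Lex.right _ (subsequent_mk_right _)

instance : LE PGame.{v} := ⟨fun x y => (leLF x y).1⟩

/-- As in Mathlib's former `PGame` preorder: `x < y ↔ x ≤ y ∧ ¬ y ≤ x`. -/
instance : LT PGame.{v} := ⟨fun x y => x ≤ y ∧ ¬ y ≤ x⟩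

def neg : PGame.{v} → PGame.{v}
  | mk l r L R => mk r l (fun i => neg (R i)) (fun i => neg (L i))

instance : Neg PGame.{v} := ⟨neg⟩

def add : PGame.{v} → PGame.{v} → PGame.{v}
  | mk xl xr xL xR, mk yl yr yL yR =>
    mk (xl ⊕ yl) (xr ⊕ yr)
      (Sum.elim (fun i => add (xL i) (mk yl yr yL yR)) (fun i => add (mk xl xr xL xR) (yL i)))
      (Sum.elim (fun i => add (xR i) (mk yl yr yL yR)) (fun i => add (mk xl xr xL xR) (yR i)))
termination_by x y => (x, y)
decreasing_by
  all_goals first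
    | exact Prod.Lex.left _ _ (subsequent_mk_left _)
    | exact Prod.Lex.left _ _ (subsequent_mk_right _)
    | exact Prod.Lex.right _ (subsequent_mk_left _)
    | exact Prod.Lex.right _ (subsequent_mk_right _)

instance : Add PGame.{v} := ⟨add⟩

instance : Sub PGame.{v} := ⟨fun x y => x + -y⟩

/-- The game `* = {0 | 0}`. -/
def star : PGame.{v} := mk PUnit PUnit (fun _ => 0) (fun _ => 0)

/-- The nim game `*o`: both players may move to `*o'` for any `o' < o`. -/
noncomputable def nim (o : Ordinal.{v}) : PGame.{v} :=
  mk o.ToType o.ToType (fun x => nim (Ordinal.typein (α := o.ToType) (· < ·) x))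
    (fun x => nim (Ordinal.typein (α := o.ToType) (· < ·) x))
termination_by o
decreasing_by all_goals exact Ordinal.typein_lt_self _

end PGame

end SetTheory

/-- Nimbers (reconstruction of Mathlib's former `Nimber`, a type synonym of `Ordinal`). -/
def Nimber : Type (v + 1) := Ordinal.{v}

noncomputable instance : ConditionallyCompleteLinearOrderBot Nimber.{v} :=
  inferInstanceAs (ConditionallyCompleteLinearOrderBot Ordinal.{v})

instance : One Nimber.{v} := inferInstanceAs (One Ordinal.{v})

open SetTheory PGame

universe u

/-- The four outcome classes of a combinatorial game. -/
inductive Outcome : Type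
  | L | N | P | R
deriving DecidableEq

/-- The partial order on outcomes: `R` least, `L` greatest, `N` and `P` incomparable. -/
def Outcome.leB : Outcome → Outcome → Bool
  | .R, _ => true
  | _, .L => true
  | .N, .N => true
  | .P, .P => true
  | _, _ => false

instance : PartialOrder Outcome where
  le a b := Outcome.leB a b = true
  le_refl a := by cases a <;> rfl
  le_trans a b c := by cases a <;> cases b <;> cases c <;> simp [Outcome.leB]
  le_antisymm a b := by cases a <;> cases b <;> simp [Outcome.leB]

/-- `misereWins true G` : Left, moving first, wins `G` under misère play;
`misereWins false G` : Right, moving first, wins `G` under misère play.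
(Under misère play, a player who cannot move wins.) -/
def misereWins : Bool → SetTheory.PGame.{u} → Prop
  | true, G => IsEmpty G.LeftMoves ∨ ∃ i, ¬ misereWins false (G.moveLeft i)
  | false, G => IsEmpty G.RightMoves ∨ ∃ j, ¬ misereWins true (G.moveRight j)
termination_by _ G => G
decreasing_by all_goals first | exact subsequent_moveLeft _ _ | exact subsequent_moveRight _ _

/-- Build an outcome class from the propositions "Left moving first wins" and
"Right moving first wins". -/
noncomputable def outcomeOf (LF RF : Prop) : Outcome := by
  classical exact if LF then (if RF then .N else .L) else (if RF then .R else .P)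

/-- The normal-play outcome `o⁺(G)` of a game. -/
noncomputable def normalOutcome (G : PGame) : Outcome :=
  outcomeOf (¬ G ≤ 0) (¬ 0 ≤ G)

/-- The misère-play outcome `o⁻(G)` of a game. -/
noncomputable def misereOutcome (G : PGame) : Outcome :=
  outcomeOf (misereWins true G) (misereWins false G)

/-- The ordinal sum `G : H` of two games: either move in `G` (destroying the `H` part),
or move in `H` keeping the base `G`. -/
def ordinalSum (G : PGame.{u}) : PGame.{u} → PGame.{u}
  | H => PGame.mk (G.LeftMoves ⊕ H.LeftMoves) (G.RightMoves ⊕ H.RightMoves)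
      (Sum.elim G.moveLeft fun i => ordinalSum G (H.moveLeft i))
      (Sum.elim G.moveRight fun j => ordinalSum G (H.moveRight j))
termination_by H => H
decreasing_by all_goals first | exact subsequent_moveLeft _ _ | exact subsequent_moveRight _ _

/-- The game `↑` (up) `= {0 | *}`. -/
def up : PGame.{u} := ⟨PUnit, PUnit, fun _ => 0, fun _ => star⟩

/-- `n` copies of `↑` added together. -/
def nUp : ℕ → PGame.{u}
  | 0 => 0
  | n + 1 => nUp n + up

/-- The integer multiple `w·↑`. -/
def upMul : ℤ → PGame.{u}
  | .ofNat k => nUp k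
  | .negSucc k => -(nUp (k + 1))

/-- Finite disjunctive sum of a family of games. -/
def psum : {k : ℕ} → (Fin k → PGame.{u}) → PGame.{u}
  | 0, _ => 0
  | k + 1, f => psum (fun i : Fin k => f i.castSucc) + f (Fin.last k)

/-- The superstar `{*x₁, …, *xₙ}`: the impartial game whose Left and Right options are
exactly the nimbers `*xᵢ`. -/
noncomputable def superstar {n : ℕ} (x : Fin n → ℕ) : PGame :=
  ⟨Fin n, Fin n, fun i => nim (x i), fun i => nim (x i)⟩

/-- The minimum excludant of a set of naturals. -/
noncomputable def setMex (S : Set ℕ) : ℕ := sInf {n | n ∉ S}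

/-- Iterated XOR (nim-sum) of a finite family of naturals. -/
def xorSum : {k : ℕ} → (Fin k → ℕ) → ℕ
  | 0, _ => 0
  | k + 1, f => xorSum (fun i : Fin k => f i.castSucc) ^^^ f (Fin.last k)

/-- A set of naturals is star-closed if it is closed under XOR with 1. -/
def StarClosedN (S : Set ℕ) : Prop := ∀ a ∈ S, a ^^^ 1 ∈ S

/-- `G` is all-small (dicotic): in every subposition, either both players can move
or neither can. -/
def AllSmall (G : PGame) : Prop :=
  (Nonempty G.LeftMoves ↔ Nonempty G.RightMoves) ∧
    ∀ p, Subsequent p G → (Nonempty p.LeftMoves ↔ Nonempty p.RightMoves)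

/-- `G` has (integer) atomic weight `w`, via the remote-star characterization:
for all sufficiently remote `N`, `*N + ↓ < G - w·↑ < *N + ↑`. -/
def HasIntAtomicWeight (G : PGame) (w : ℤ) : Prop :=
  ∃ N₀ : ℕ, ∀ N : ℕ, N₀ ≤ N →
    nim N + (-up) < G - upMul w ∧ G - upMul w < nim N + up

open Classical in
/-- The misère Grundy value of an (impartial) game: the mex of the misère Grundy values
of its options, except that the empty game has misère Grundy value `1`. -/
noncomputable def misereGrundy : PGame.{u} → Nimber.{u}
  | G =>
    if IsEmpty G.LeftMoves then 1
    else sInf (Set.range fun i => misereGrundy (G.moveLeft i))ᶜ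
termination_by G => G
decreasing_by all_goals first | exact subsequent_moveLeft _ _ | exact subsequent_moveRight _ _

/-- A set of games closed under disjunctive sum and under taking subpositions. -/
def SClosed (A : Set PGame) : Prop :=
  (∀ G ∈ A, ∀ H ∈ A, G + H ∈ A) ∧ ∀ G ∈ A, ∀ G', Subsequent G' G → G' ∈ A

/-- `K` is an evil kernel of `A`: setting `G* = G` for `G ∈ K` and `G* = G + *` otherwise,
one has `o⁺(G) = o⁻(G*)` and `o⁻(G) = o⁺(G*)` for all `G ∈ A`. -/
def IsEvilKernel (A K : Set PGame) : Prop :=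
  K ⊆ A ∧ ∀ G ∈ A,
    (G ∈ K → normalOutcome G = misereOutcome G ∧ misereOutcome G = normalOutcome G) ∧
    (G ∉ K → normalOutcome G = misereOutcome (G + star) ∧
      misereOutcome G = normalOutcome (G + star))

/-- `(A, K)` is evilly normal: `A` is closed, `K` is an evil kernel of `A`, and
`G + H ∉ K ↔ (G ∉ K ∧ H ∉ K)` for all `G, H ∈ A`. -/
def EvillyNormal (A K : Set PGame) : Prop :=
  SClosed A ∧ IsEvilKernel A K ∧ ∀ G ∈ A, ∀ H ∈ A, (G + H ∉ K ↔ G ∉ K ∧ H ∉ K)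

/-- Normal-play equality of games: `G` and `H` have the same normal-play outcome in
every sum. -/
def NormalEq (G H : PGame) : Prop := ∀ X, normalOutcome (G + X) = normalOutcome (H + X)


def swlf (x y : PGame.{u}) : Prop := (leLF x y).2

theorem sw_le_def (x y : PGame.{u}) :
    x ≤ y ↔ (∀ i, swlf (x.moveLeft i) y) ∧ ∀ j, swlf x (y.moveRight j) := by
  obtain ⟨xl, xr, xL, xR⟩ := x
  obtain ⟨yl, yr, yL, yR⟩ := y
  show (leLF _ _).1 ↔ _
  rw [leLF.eq_1]
  exact Iff.rfl

theorem sw_lf_def (x y : PGame.{u}) :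
    swlf x y ↔ (∃ i, x ≤ y.moveLeft i) ∨ ∃ j, x.moveRight j ≤ y := by
  obtain ⟨xl, xr, xL, xR⟩ := x
  obtain ⟨yl, yr, yL, yR⟩ := y
  show (leLF _ _).2 ↔ _
  rw [leLF.eq_1]
  exact Iff.rfl

theorem sw_add_mk (xl xr : Type u) (xL : xl → PGame.{u}) (xR : xr → PGame.{u})
    (yl yr : Type u) (yL : yl → PGame.{u}) (yR : yr → PGame.{u}) :
    mk xl xr xL xR + mk yl yr yL yR = mk (xl ⊕ yl) (xr ⊕ yr)
      (Sum.elim (fun i => xL i + mk yl yr yL yR) (fun i => mk xl xr xL xR + yL i))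
      (Sum.elim (fun i => xR i + mk yl yr yL yR) (fun i => mk xl xr xL xR + yR i)) :=
  PGame.add.eq_1 xl xr xL xR yl yr yL yR

inductive SwBisim : PGame.{u} → PGame.{u} → Prop
  | intro (x y : PGame.{u})
      (f : x.LeftMoves → y.LeftMoves) (f' : y.LeftMoves → x.LeftMoves)
      (g : x.RightMoves → y.RightMoves) (g' : y.RightMoves → x.RightMoves)
      (hf : ∀ i, SwBisim (x.moveLeft i) (y.moveLeft (f i)))
      (hf' : ∀ j, SwBisim (x.moveLeft (f' j)) (y.moveLeft j))
      (hg : ∀ i, SwBisim (x.moveRight i) (y.moveRight (g i)))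
      (hg' : ∀ j, SwBisim (x.moveRight (g' j)) (y.moveRight j)) : SwBisim x y

theorem swBisim_refl (x : PGame.{u}) : SwBisim x x := by
  induction x with
  | mk xl xr xL xR ihl ihr =>
    exact SwBisim.intro _ _ id id id id ihl ihl ihr ihr

theorem SwBisim.symm {x y : PGame.{u}} (h : SwBisim x y) : SwBisim y x := by
  induction h with
  | intro x y f f' g g' hf hf' hg hg' ihf ihf' ihg ihg' =>
    exact SwBisim.intro y x f' f g' g ihf' ihf ihg' ihg

theorem SwBisim.trans_aux {x y : PGame.{u}} (h1 : SwBisim x y) :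
    ∀ z, SwBisim y z → SwBisim x z := by
  induction h1 with
  | intro x y f f' g g' hf hf' hg hg' ihf ihf' ihg ihg' =>
    intro z h2
    cases h2 with
    | intro _ _ k k' l l' hk hk' hl hl' =>
      exact SwBisim.intro x z (k ∘ f) (f' ∘ k') (l ∘ g) (g' ∘ l')
        (fun i => ihf i _ (hk (f i))) (fun j => ihf' (k' j) _ (hk' j))
        (fun i => ihg i _ (hl (g i))) (fun j => ihg' (l' j) _ (hl' j))

theorem SwBisim.trans {x y z : PGame.{u}} (h1 : SwBisim x y) (h2 : SwBisim y z) :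
    SwBisim x z :=
  SwBisim.trans_aux h1 z h2

theorem sw_le_of_bisim {x y : PGame.{u}} (hxy : SwBisim x y) :
    ∀ {z w : PGame.{u}}, SwBisim z w → (x ≤ z → y ≤ w) ∧ (swlf x z → swlf y w) := by
  induction hxy with
  | intro x y f f' g g' hf hf' hg hg' ihf ihf' ihg ihg' =>
    intro z w hzw
    induction hzw with
    | intro z w k k' l l' hk hk' hl hl' jhk jhk' jhl jhl' =>
      constructor
      · intro h
        have h' := (sw_le_def _ _).1 h
        exact (sw_le_def _ _).2
          ⟨fun i => (ihf' i (SwBisim.intro z w k k' l l' hk hk' hl hl')).2 (h'.1 (f' i)),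
           fun j => (jhl' j).2 (h'.2 (l' j))⟩
      · intro h
        rcases (sw_lf_def _ _).1 h with ⟨i, hi⟩ | ⟨j, hj⟩
        · exact (sw_lf_def _ _).2 (Or.inl ⟨k i, (jhk i).1 hi⟩)
        · exact (sw_lf_def _ _).2
            (Or.inr ⟨g j, (ihg j (SwBisim.intro z w k k' l l' hk hk' hl hl')).1 hj⟩)

theorem sw_normalOutcome_bisim {G G' : PGame.{u}} (h : SwBisim G G') :
    normalOutcome G = normalOutcome G' := by
  unfold normalOutcome
  have h0 := swBisim_refl (0 : PGame.{u})
  have h1 : G ≤ 0 ↔ G' ≤ 0 := ⟨(sw_le_of_bisim h h0).1, (sw_le_of_bisim h.symm h0).1⟩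
  have h2 : (0 : PGame.{u}) ≤ G ↔ 0 ≤ G' :=
    ⟨(sw_le_of_bisim h0 h).1, (sw_le_of_bisim h0 h.symm).1⟩
  rw [h1, h2]

theorem sw_bisim_add (x : PGame.{u}) :
    ∀ (y x' y' : PGame.{u}), SwBisim x x' → SwBisim y y' → SwBisim (x + y) (x' + y') := by
  induction x with
  | mk xl xr xL xR ihxl ihxr =>
    intro y
    induction y with
    | mk yl yr yL yR ihyl ihyr =>
      intro x' y' hx hy
      obtain ⟨x'l, x'r, x'L, x'R⟩ := x'
      obtain ⟨y'l, y'r, y'L, y'R⟩ := y'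
      cases hx with
      | intro _ _ f f' g g' hf hf' hg hg' =>
        cases hy with
        | intro _ _ k k' l l' hk hk' hl hl' =>
          rw [sw_add_mk, sw_add_mk]
          refine SwBisim.intro _ _ (Sum.map f k) (Sum.map f' k') (Sum.map g l) (Sum.map g' l')
            ?_ ?_ ?_ ?_
          · rintro (i|i)
            · exact ihxl i _ _ _ (hf i) (SwBisim.intro _ _ k k' l l' hk hk' hl hl')
            · exact ihyl i _ _ (SwBisim.intro _ _ f f' g g' hf hf' hg hg') (hk i)
          · rintro (i|i)
            · exact ihxl (f' i) _ _ _ (hf' i) (SwBisim.intro _ _ k k' l l' hk hk' hl hl')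
            · exact ihyl (k' i) _ _ (SwBisim.intro _ _ f f' g g' hf hf' hg hg') (hk' i)
          · rintro (i|i)
            · exact ihxr i _ _ _ (hg i) (SwBisim.intro _ _ k k' l l' hk hk' hl hl')
            · exact ihyr i _ _ (SwBisim.intro _ _ f f' g g' hf hf' hg hg') (hl i)
          · rintro (i|i)
            · exact ihxr (g' i) _ _ _ (hg' i) (SwBisim.intro _ _ k k' l l' hk hk' hl hl')
            · exact ihyr (l' i) _ _ (SwBisim.intro _ _ f f' g g' hf hf' hg hg') (hl' i)

theorem sw_add_comm (x : PGame.{u}) : ∀ y : PGame.{u}, SwBisim (x + y) (y + x) := by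
  induction x with
  | mk xl xr xL xR ihxl ihxr =>
    intro y
    induction y with
    | mk yl yr yL yR ihyl ihyr =>
      rw [sw_add_mk, sw_add_mk]
      refine SwBisim.intro _ _ Sum.swap Sum.swap Sum.swap Sum.swap ?_ ?_ ?_ ?_
      · rintro (i|i)
        · exact ihxl i _
        · exact ihyl i
      · rintro (i|i)
        · exact ihyl i
        · exact ihxl i _
      · rintro (i|i)
        · exact ihxr i _
        · exact ihyr i
      · rintro (i|i)
        · exact ihyr i
        · exact ihxr i _

theorem sw_add_assoc (x : PGame.{u}) :
    ∀ y z : PGame.{u}, SwBisim (x + y + z) (x + (y + z)) := by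
  induction x with
  | mk xl xr xL xR ihxl ihxr =>
    intro y
    induction y with
    | mk yl yr yL yR ihyl ihyr =>
      intro z
      induction z with
      | mk zl zr zL zR ihzl ihzr =>
        simp only [sw_add_mk]
        refine SwBisim.intro _ _ (Equiv.sumAssoc _ _ _) (Equiv.sumAssoc _ _ _).symm
          (Equiv.sumAssoc _ _ _) (Equiv.sumAssoc _ _ _).symm ?_ ?_ ?_ ?_
        · rintro ((i|i)|i)
          · have h := ihxl i (mk yl yr yL yR) (mk zl zr zL zR)
            simp only [sw_add_mk] at h
            exact h
          · exact ihyl i (mk zl zr zL zR)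
          · have h := ihzl i
            simp only [sw_add_mk] at h
            exact h
        · rintro (i|(i|i))
          · have h := ihxl i (mk yl yr yL yR) (mk zl zr zL zR)
            simp only [sw_add_mk] at h
            exact h
          · exact ihyl i (mk zl zr zL zR)
          · have h := ihzl i
            simp only [sw_add_mk] at h
            exact h
        · rintro ((i|i)|i)
          · have h := ihxr i (mk yl yr yL yR) (mk zl zr zL zR)
            simp only [sw_add_mk] at h
            exact h
          · exact ihyr i (mk zl zr zL zR)
          · have h := ihzr i
            simp only [sw_add_mk] at h
            exact h
        · rintro (i|(i|i))
          · have h := ihxr i (mk yl yr yL yR) (mk zl zr zL zR)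
            simp only [sw_add_mk] at h
            exact h
          · exact ihyr i (mk zl zr zL zR)
          · have h := ihzr i
            simp only [sw_add_mk] at h
            exact h

theorem sw_add_zero (x : PGame.{u}) : SwBisim (x + 0) x := by
  induction x with
  | mk xl xr xL xR ihl ihr =>
    rw [show (0 : PGame.{u}) = mk PEmpty PEmpty PEmpty.elim PEmpty.elim from rfl, sw_add_mk]
    refine SwBisim.intro _ _ (Sum.elim id PEmpty.elim) Sum.inl (Sum.elim id PEmpty.elim) Sum.inl
      ?_ ?_ ?_ ?_
    · rintro (i|i)
      · exact ihl i
      · exact PEmpty.elim i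
    · intro j
      exact ihl j
    · rintro (i|i)
      · exact ihr i
      · exact PEmpty.elim i
    · intro j
      exact ihr j

theorem sw_zero_add (x : PGame.{u}) : SwBisim (0 + x) x :=
  (sw_add_comm 0 x).trans (sw_add_zero x)

theorem sw_star_add_star_eq : ∃ (tl tr : Type u) (tL : tl → PGame.{u}) (tR : tr → PGame.{u}),
    PGame.star.{u} + PGame.star = mk tl tr tL tR ∧ (∀ k, SwBisim (tL k) PGame.star) ∧
      (∀ k, SwBisim (tR k) PGame.star) := by
  refine ⟨_, _, _, _, sw_add_mk PUnit PUnit (fun _ => 0) (fun _ => 0)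
    PUnit PUnit (fun _ => 0) (fun _ => 0), ?_, ?_⟩
  · rintro (k|k)
    · exact sw_zero_add PGame.star
    · exact sw_add_zero PGame.star
  · rintro (k|k)
    · exact sw_zero_add PGame.star
    · exact sw_add_zero PGame.star

theorem sw_lf_add_star_of_le {y : PGame.{u}} (h : y ≤ 0) : swlf (y + PGame.star) 0 := by
  obtain ⟨yl, yr, yL, yR⟩ := y
  unfold PGame.star
  rw [sw_add_mk]
  exact (sw_lf_def _ _).2
    (Or.inr ⟨Sum.inr PUnit.unit, (sw_le_of_bisim (sw_add_zero _).symm (swBisim_refl 0)).1 h⟩)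

theorem sw_lf_add_star_of_ge {y : PGame.{u}} (h : 0 ≤ y) : swlf 0 (y + PGame.star) := by
  obtain ⟨yl, yr, yL, yR⟩ := y
  unfold PGame.star
  rw [sw_add_mk]
  exact (sw_lf_def _ _).2
    (Or.inl ⟨Sum.inr PUnit.unit, (sw_le_of_bisim (swBisim_refl 0) (sw_add_zero _).symm).1 h⟩)

theorem sw_lf_of_add_star_le {y : PGame.{u}} (h : y + PGame.star ≤ 0) : swlf y 0 := by
  obtain ⟨yl, yr, yL, yR⟩ := y
  unfold PGame.star at h
  rw [sw_add_mk] at h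
  exact (sw_le_of_bisim (sw_add_zero _) (swBisim_refl 0)).2
    (((sw_le_def _ _).1 h).1 (Sum.inr PUnit.unit))

theorem sw_lf_of_add_star_ge {y : PGame.{u}} (h : 0 ≤ y + PGame.star) : swlf 0 y := by
  obtain ⟨yl, yr, yL, yR⟩ := y
  unfold PGame.star at h
  rw [sw_add_mk] at h
  exact (sw_le_of_bisim (swBisim_refl 0) (sw_add_zero _)).2
    (((sw_le_def _ _).1 h).2 (Sum.inr PUnit.unit))

theorem sw_star_cancel_aux (tl tr : Type u) (tL : tl → PGame.{u}) (tR : tr → PGame.{u})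
    (hL : ∀ k, SwBisim (tL k) PGame.star) (hR : ∀ k, SwBisim (tR k) PGame.star)
    (G : PGame.{u}) :
    (G + mk tl tr tL tR ≤ 0 ↔ G ≤ 0) ∧ (0 ≤ G + mk tl tr tL tR ↔ 0 ≤ G) ∧
      (swlf (G + mk tl tr tL tR) 0 ↔ swlf G 0) ∧ (swlf 0 (G + mk tl tr tL tR) ↔ swlf 0 G) := by
  induction G with
  | mk xl xr xL xR ihl ihr =>
    rw [sw_add_mk]
    refine ⟨⟨fun h => ?_, fun h => ?_⟩, ⟨fun h => ?_, fun h => ?_⟩,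
      ⟨fun h => ?_, fun h => ?_⟩, ⟨fun h => ?_, fun h => ?_⟩⟩
    · have h' := (sw_le_def _ _).1 h
      exact (sw_le_def _ _).2
        ⟨fun i => (ihl i).2.2.1.mp (h'.1 (Sum.inl i)), fun j => PEmpty.elim j⟩
    · have h' := (sw_le_def _ _).1 h
      refine (sw_le_def _ _).2 ⟨?_, fun j => PEmpty.elim j⟩
      rintro (i|k)
      · exact (ihl i).2.2.1.mpr (h'.1 i)
      · exact (sw_le_of_bisim (sw_bisim_add _ _ _ _ (swBisim_refl _) (hL k).symm)
          (swBisim_refl 0)).2 (sw_lf_add_star_of_le h)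
    · have h' := (sw_le_def _ _).1 h
      exact (sw_le_def _ _).2
        ⟨fun i => PEmpty.elim i, fun j => (ihr j).2.2.2.mp (h'.2 (Sum.inl j))⟩
    · have h' := (sw_le_def _ _).1 h
      refine (sw_le_def _ _).2 ⟨fun i => PEmpty.elim i, ?_⟩
      rintro (j|k)
      · exact (ihr j).2.2.2.mpr (h'.2 j)
      · exact (sw_le_of_bisim (swBisim_refl 0)
          (sw_bisim_add _ _ _ _ (swBisim_refl _) (hR k).symm)).2 (sw_lf_add_star_of_ge h)
    · rcases (sw_lf_def _ _).1 h with ⟨i, -⟩ | ⟨j | k, hj⟩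
      · exact PEmpty.elim i
      · exact (sw_lf_def _ _).2 (Or.inr ⟨j, (ihr j).1.mp hj⟩)
      · exact sw_lf_of_add_star_le ((sw_le_of_bisim
          (sw_bisim_add _ _ _ _ (swBisim_refl _) (hR k)) (swBisim_refl 0)).1 hj)
    · rcases (sw_lf_def _ _).1 h with ⟨i, -⟩ | ⟨j, hj⟩
      · exact PEmpty.elim i
      · exact (sw_lf_def _ _).2 (Or.inr ⟨Sum.inl j, (ihr j).1.mpr hj⟩)
    · rcases (sw_lf_def _ _).1 h with ⟨i | k, hi⟩ | ⟨j, -⟩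
      · exact (sw_lf_def _ _).2 (Or.inl ⟨i, (ihl i).2.1.mp hi⟩)
      · exact sw_lf_of_add_star_ge ((sw_le_of_bisim (swBisim_refl 0)
          (sw_bisim_add _ _ _ _ (swBisim_refl _) (hL k))).1 hi)
      · exact PEmpty.elim j
    · rcases (sw_lf_def _ _).1 h with ⟨i, hi⟩ | ⟨j, -⟩
      · exact (sw_lf_def _ _).2 (Or.inl ⟨Sum.inl i, (ihl i).2.1.mpr hi⟩)
      · exact PEmpty.elim j

theorem sw_normalOutcome_add_star_star (G : PGame.{u}) :
    normalOutcome (G + (PGame.star + PGame.star)) = normalOutcome G := by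
  obtain ⟨tl, tr, tL, tR, hT, hL, hR⟩ := sw_star_add_star_eq.{u}
  rw [hT]
  have := sw_star_cancel_aux tl tr tL tR hL hR G
  unfold normalOutcome
  rw [this.1, this.2.1]

/-- if `(A, K)` is evilly normal and `H ∈ A \ K` is equal to `*` in
normal play, then for every `G ∈ A \ K`, `o⁻(G + H) = o⁺(G)` and `o⁺(G + H) = o⁻(G)`. -/
theorem star_like_swap (A K : Set PGame) (h : EvillyNormal A K)
    (H : PGame) (hHA : H ∈ A) (hHK : H ∉ K) (hstar : NormalEq H star) :
    ∀ G ∈ A, G ∉ K →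
      misereOutcome (G + H) = normalOutcome G ∧
        normalOutcome (G + H) = misereOutcome G := by
  intro G hGA hGK
  obtain ⟨hclosed, hker, hsum⟩ := h
  have hGH_A : G + H ∈ A := hclosed.1 G hGA H hHA
  have hGH_K : G + H ∉ K := (hsum G hGA H hHA).mpr ⟨hGK, hHK⟩
  have hG := (hker.2 G hGA).2 hGK
  have hGH := (hker.2 (G + H) hGH_A).2 hGH_K
  constructor
  · rw [hGH.2]
    rw [sw_normalOutcome_bisim ((sw_bisim_add _ _ _ _ (sw_add_comm G H) (swBisim_refl _)).trans
      (sw_add_assoc H G PGame.star)), hstar (G + PGame.star)]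
    rw [sw_normalOutcome_bisim ((sw_add_comm PGame.star (G + PGame.star)).trans
      (sw_add_assoc G PGame.star PGame.star)), sw_normalOutcome_add_star_star]
  · rw [hG.2, sw_normalOutcome_bisim (sw_add_comm G H), hstar G,
      sw_normalOutcome_bisim (sw_add_comm PGame.star G)]
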